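/- arXiv:math/9906044 — 4 statements merged into one kernel-verified Lean document; each statement's English description precedes it below -/
import Mathlib

section
/- Let K be a field and V, W two K-vector spaces with a bilinear pairing B : V × W → K that is nondegenerate in both arguments. Let P : V → V be a K-linear map with P ∘ P = P, and Pᵗ : W → W a K-linear map satisfying B(P v, w) = B(v, Pᵗ w) for all v ∈ V, w ∈ W (hence also Pᵗ ∘ Pᵗ = Pᵗ). Then the restriction of B to (range P) × (range Pᵗ) is again nondegenerate in both arguments. -/
/-- Proposition 1 (ii) of the paper.
A nondegenerate bilinear pairing `B : V × W → K`, an idempotent `P : V → V` and a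
transpose `Pᵗ : W → W` (i.e. `B (P v) w = B v (Pᵗ w)`); then the restriction of `B`
to `range P × range Pᵗ` is again nondegenerate in both arguments. -/
theorem pairing_restrict_range_nondegenerate
    {K V W : Type*} [Field K] [AddCommGroup V] [Module K V] [AddCommGroup W] [Module K W]
    (B : V →ₗ[K] W →ₗ[K] K)
    (hB1 : ∀ v : V, (∀ w : W, B v w = 0) → v = 0)
    (hB2 : ∀ w : W, (∀ v : V, B v w = 0) → w = 0)
    (P : V →ₗ[K] V) (hP : P ∘ₗ P = P)
    (Pt : W →ₗ[K] W)
    (hPt : ∀ (v : V) (w : W), B (P v) w = B v (Pt w)) :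
    (∀ v ∈ LinearMap.range P, (∀ w ∈ LinearMap.range Pt, B v w = 0) → v = 0) ∧
    (∀ w ∈ LinearMap.range Pt, (∀ v ∈ LinearMap.range P, B v w = 0) → w = 0) := by
  have hPidem : ∀ v : V, P (P v) = P v := fun v =>
    congrFun (congrArg (DFunLike.coe) hP) v
  have hPtidem : ∀ w : W, Pt (Pt w) = Pt w := by
    intro w
    rw [← sub_eq_zero]
    apply hB2
    intro v
    have h1 : B v (Pt (Pt w)) = B (P (P v)) w := by rw [hPt, hPt]
    simp [map_sub, h1, hPidem, hPt]
  constructor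
  · rintro v ⟨u, rfl⟩ h
    apply hB1
    intro w
    have : B (P u) w = B (P u) (Pt w) := by
      rw [← hPt, hPidem]
    rw [this]
    exact h _ ⟨w, rfl⟩
  · rintro w ⟨u, rfl⟩ h
    apply hB2
    intro v
    have : B v (Pt u) = B (P v) (Pt u) := by
      rw [hPt, hPtidem]
    rw [this]
    exact h _ ⟨v, rfl⟩
end

section
/- Let A be a Hopf algebra over ℂ with comultiplication Δ, counit ε and antipode S, let Γ be an (A,A)-bimodule, and let d : A → Γ be a ℂ-linear map satisfying the Leibniz rule d(ab) = (d a)·b + a·(d b) for all a, b ∈ A. Define ω : A → Γ by ω(a) = Σ S(a₍₁₎)·d(a₍₂₎) and the right adjoint action of A on Γ by γ ◁ a = Σ S(a₍₁₎)·γ·a₍₂₎. Then for all a, b ∈ A: ω(ab) = ω(a) ◁ b + ε(a) ω(b). -/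
/-!
Since `Δ(ab) = Δ(a)Δ(b)` and `S(ab) = S(b)S(a)`, the Leibniz rule splits each Sweedler term
`S(b₍₁₎)S(a₍₁₎)·d(a₍₂₎b₍₂₎)` of `ω(ab)` into `S(b₍₁₎)·(S(a₍₁₎)·d a₍₂₎)·b₍₂₎`, which sums to
`ω(a) ◁ b`, and `S(b₍₁₎)S(a₍₁₎)a₍₂₎·d b₍₂₎`, which collapses to `ε(a) ω(b)` by the antipode
axiom `Σ S(a₍₁₎)a₍₂₎ = ε(a)1`.
-/

open TensorProduct

noncomputable section

variable (A : Type*) [Ring A] [HopfAlgebra ℂ A]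
variable (Γ : Type*) [AddCommGroup Γ] [Module ℂ Γ]
  [Module A Γ] [Module Aᵐᵒᵖ Γ]
  [IsScalarTower ℂ A Γ] [IsScalarTower ℂ Aᵐᵒᵖ Γ]
  [SMulCommClass A Aᵐᵒᵖ Γ]

/-- The bilinear map `(x, y) ↦ S(x)·(d y)` used to define `ω(a) = Σ S(a₍₁₎)·d(a₍₂₎)`. -/
def omegaBil (d : A →ₗ[ℂ] Γ) : A →ₗ[ℂ] A →ₗ[ℂ] Γ :=
  LinearMap.mk₂ ℂ (fun x y => HopfAlgebra.antipode (R := ℂ) x • d y)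
    (fun x x' y => by simp only [map_add, add_smul])
    (fun c x y => by simp only [map_smul, smul_assoc])
    (fun x y y' => by simp only [map_add, smul_add])
    (fun c x y => by simp only [map_smul]; rw [smul_comm])

/-- `ω(a) = Σ S(a₍₁₎)·d(a₍₂₎)`. -/
def omegaFun (d : A →ₗ[ℂ] Γ) (a : A) : Γ :=
  TensorProduct.lift (omegaBil A Γ d) (Coalgebra.comul a)

/-- The bilinear map `(x, y) ↦ S(x)·γ·y` used to define the right adjoint action. -/
def adjBil (γ : Γ) : A →ₗ[ℂ] A →ₗ[ℂ] Γ :=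
  LinearMap.mk₂ ℂ (fun x y => HopfAlgebra.antipode (R := ℂ) x • (MulOpposite.op y • γ))
    (fun x x' y => by simp only [map_add, add_smul])
    (fun c x y => by simp only [map_smul, smul_assoc])
    (fun x y y' => by simp only [MulOpposite.op_add, add_smul, smul_add])
    (fun c x y => by simp only [MulOpposite.op_smul, smul_assoc]; rw [smul_comm])

/-- The right adjoint action `γ ◁ a = Σ S(a₍₁₎)·γ·a₍₂₎`. -/
def racFun (γ : Γ) (a : A) : Γ :=
  TensorProduct.lift (adjBil A Γ γ) (Coalgebra.comul a)

section LeibnizAntipode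

open Coalgebra HopfAlgebra

variable {R H M : Type*} [CommSemiring R] [Semiring H] [HopfAlgebra R H] [AddCommMonoid M]

theorem antipode_mul_smul_map_mul [Module H M] [Module Hᵐᵒᵖ M] [SMulCommClass H Hᵐᵒᵖ M]
    (d : H → M) (hLeibniz : ∀ a b : H, d (a * b) = MulOpposite.op b • d a + a • d b)
    (x y u v : H) :
    antipode R (x * u) • d (y * v) =
      antipode R u • MulOpposite.op v • (antipode R x • d y) +
        (antipode R u * (antipode R x * y)) • d v := by
  simp only [hLeibniz, antipode_mul_antidistrib, smul_add, mul_smul,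
    smul_comm (antipode R x) (MulOpposite.op v)]

theorem sum_mul_antipode_mul_smul [Module R M] [Module H M] [IsScalarTower R H M]
    {a : H} {ι : Type*} (r : Repr R a ι) (u : H) (m : M) :
    ∑ i ∈ r.index, (u * (antipode R (r.left i) * r.right i)) • m = counit (R := R) a • u • m := by
  rw [← Finset.sum_smul, ← Finset.mul_sum, sum_antipode_mul_eq_smul, mul_smul_comm, mul_one,
    smul_assoc]

end LeibnizAntipode

section SweedlerFormulas

open Coalgebra HopfAlgebra

variable {H M : Type*} [Ring H] [HopfAlgebra ℂ H] [AddCommGroup M] [Module ℂ M] [Module H M]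
  [IsScalarTower ℂ H M]

theorem omegaFun_eq_sum (d : H →ₗ[ℂ] M) {a : H} {ι : Type*} (r : Repr ℂ a ι) :
    omegaFun H M d a = ∑ i ∈ r.index, antipode ℂ (r.left i) • d (r.right i) := by
  simp [omegaFun, ← r.eq, omegaBil]

theorem racFun_eq_sum [Module Hᵐᵒᵖ M] [IsScalarTower ℂ Hᵐᵒᵖ M] (γ : M) {a : H} {ι : Type*}
    (r : Repr ℂ a ι) :
    racFun H M γ a = ∑ i ∈ r.index, antipode ℂ (r.left i) • MulOpposite.op (r.right i) • γ := by
  simp [racFun, ← r.eq, adjBil]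

end SweedlerFormulas

/-- identity (5.2) of the paper.
For a Hopf algebra `A` over ℂ, an `(A,A)`-bimodule `Γ` (the right action is written as
an `Aᵐᵒᵖ`-action) and a ℂ-linear map `d : A → Γ` satisfying the Leibniz rule
`d(ab) = (d a)·b + a·(d b)`, the map `ω(a) = Σ S(a₍₁₎)·d(a₍₂₎)` satisfies
`ω(ab) = ω(a) ◁ b + ε(a) ω(b)`, where `γ ◁ a = Σ S(a₍₁₎)·γ·a₍₂₎`. -/
theorem omega_mul (d : A →ₗ[ℂ] Γ)
    (hLeibniz : ∀ a b : A, d (a * b) = MulOpposite.op b • d a + a • d b) :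
    ∀ a b : A,
      omegaFun A Γ d (a * b) =
        racFun A Γ (omegaFun A Γ d a) b +
          (Coalgebra.counit (R := ℂ) (A := A) a) • omegaFun A Γ d b := by
  intro a b
  let ra := Coalgebra.Repr.arbitrary ℂ a
  let rb := Coalgebra.Repr.arbitrary ℂ b
  rw [omegaFun_eq_sum d (ra.mul rb), racFun_eq_sum _ rb, omegaFun_eq_sum d ra,
    omegaFun_eq_sum d rb, Finset.smul_sum]
  simp only [Coalgebra.Repr.mul_index, Coalgebra.Repr.mul_left, Coalgebra.Repr.mul_right,
    Finset.sum_product, antipode_mul_smul_map_mul d hLeibniz, Finset.sum_add_distrib]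
  rw [Finset.sum_comm]
  congr 1
  · simp only [Finset.smul_sum]
  · rw [Finset.sum_comm]
    exact Finset.sum_congr rfl fun _ _ => sum_mul_antipode_mul_smul ra _ _

end
end

section
/- Let q ∈ ℂ be nonzero and not a root of unity (qⁿ ≠ 1 for all integers n ≥ 1). Then there is no ρ ∈ ℂ satisfying simultaneously q¹²ρ⁴ + q⁴ρ⁴ + 2q¹¹ρ³ − 2q⁹ρ³ + 2q⁵ρ³ − 2q³ρ³ − q¹²ρ² + q⁸ρ² − 4q⁶ρ² + q⁴ρ² − ρ² − 2q⁹ρ + 2q⁷ρ − 2q³ρ + 2qρ + q⁸ + 1 = 0 and q⁴ρ² − q²ρ² + ρ² + q³ρ − qρ − q⁴ + q² − 1 = 0. -/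
/-- "Case 1 is impossible", Part 2 of Section 5 of the paper.
If `q ∈ ℂ` is nonzero and not a root of unity, then no `ρ ∈ ℂ` satisfies
`d₁ = 0` and `d₂ = 0` simultaneously. -/
theorem case1_impossible
    (q : ℂ) (hq : q ≠ 0) (hroot : ∀ n : ℕ, 1 ≤ n → q ^ n ≠ 1) :
    ¬ ∃ ρ : ℂ,
      (q ^ 12 * ρ ^ 4 + q ^ 4 * ρ ^ 4 + 2 * q ^ 11 * ρ ^ 3 - 2 * q ^ 9 * ρ ^ 3 +
        2 * q ^ 5 * ρ ^ 3 - 2 * q ^ 3 * ρ ^ 3 - q ^ 12 * ρ ^ 2 + q ^ 8 * ρ ^ 2 -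
        4 * q ^ 6 * ρ ^ 2 + q ^ 4 * ρ ^ 2 - ρ ^ 2 - 2 * q ^ 9 * ρ + 2 * q ^ 7 * ρ -
        2 * q ^ 3 * ρ + 2 * q * ρ + q ^ 8 + 1 = 0) ∧
      (q ^ 4 * ρ ^ 2 - q ^ 2 * ρ ^ 2 + ρ ^ 2 + q ^ 3 * ρ - q * ρ - q ^ 4 + q ^ 2 - 1
        = 0) := by
  rintro ⟨ρ, h1, h2⟩
  have key : q * (q ^ 12 + q ^ 6 + 1) * (q ^ 2 - 1) ^ 6 = 0 := by
    linear_combination ((-1) * q^1 + (2) * q^3 + (-1) * q^5 + (-1) * q^7 + (3) * q^9 + (-3) * q^11 + (2) * q^13 + (1) * ρ + (-2) * ρ * q^2 + (3) * ρ * q^4 + (-2) * ρ * q^6 + (1) * ρ * q^8 + (1) * ρ * q^10 + (-1) * ρ * q^12 + (1) * ρ * q^14) * h1 + ((-2) * q^1 + (6) * q^3 + (-8) * q^5 + (4) * q^7 + (5) * q^9 + (-9) * q^11 + (5) * q^13 + (4) * q^15 + (-7) * q^17 + (5) * q^19 + (-1) * q^21 + (1) * ρ + (-1) * ρ * q^2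 + (-1) * ρ * q^4 + (6) * ρ * q^6 + (-5) * ρ * q^8 + (1) * ρ * q^10 + (4) * ρ * q^12 + (-2) * ρ * q^14 + (2) * ρ * q^18 + (-1) * ρ * q^20 + (2) * ρ^2 * q^3 + (-4) * ρ^2 * q^5 + (4) * ρ^2 * q^7 + (-1) * ρ^2 * q^9 + (-3) * ρ^2 * q^11 + (5) * ρ^2 * q^13 + (-4) * ρ^2 * q^15 + (-1) * ρ^2 * q^17 + (3) * ρ^2 * q^19 + (-3) * ρ^2 * q^21 + (-1) * ρ^3 * q^4 + (1) * ρ^3 * q^6 + (-1) * ρ^3 * q^8 + (-1) * ρ^3 * q^12 + (-1) * ρ^3 * q^16 + (-1) * ρ^3 * q^22) * h2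
  have h2ne : q ^ 2 - 1 ≠ 0 := sub_ne_zero.mpr (hroot 2 (by norm_num))
  have h6ne : q ^ 6 - 1 ≠ 0 := sub_ne_zero.mpr (hroot 6 (by norm_num))
  have h18ne : q ^ 18 - 1 ≠ 0 := sub_ne_zero.mpr (hroot 18 (by norm_num))
  have hmid : q ^ 12 + q ^ 6 + 1 ≠ 0 := by
    intro h
    apply h18ne
    have : q ^ 18 - 1 = (q ^ 6 - 1) * (q ^ 12 + q ^ 6 + 1) := by ring
    rw [this, h, mul_zero]
  rcases mul_eq_zero.mp key with h | h
  · rcases mul_eq_zero.mp h with h | h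
    · exact hq h
    · exact hmid h
  · exact h2ne (pow_eq_zero_iff (by norm_num) |>.mp h)
end

section
/- Let q ∈ ℂ be nonzero and not a root of unity (qⁿ ≠ 1 for all integers n ≥ 1). Then there is no ρ ∈ ℂ satisfying simultaneously q⁴ρ² − q²ρ² + ρ² + q³ρ − qρ − q⁴ + q² − 1 = 0 and q⁸ρ⁴ + ρ⁴ + 2q⁹ρ³ − 2q⁷ρ³ + 2q³ρ³ − 2qρ³ − q¹²ρ² + q⁸ρ² − 4q⁶ρ² + q⁴ρ² − ρ² − 2q¹¹ρ + 2q⁹ρ − 2q⁵ρ + 2q³ρ + q¹² + q⁴ = 0. -/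
/-- "Case 2 is impossible", Part 2 of Section 5 of the paper.
If `q ∈ ℂ` is nonzero and not a root of unity, then no `ρ ∈ ℂ` satisfies
`d₃ = 0` and `d₄ = 0` simultaneously. -/
theorem case2_impossible
    (q : ℂ) (hq : q ≠ 0) (hroot : ∀ n : ℕ, 1 ≤ n → q ^ n ≠ 1) :
    ¬ ∃ ρ : ℂ,
      (q ^ 4 * ρ ^ 2 - q ^ 2 * ρ ^ 2 + ρ ^ 2 + q ^ 3 * ρ - q * ρ - q ^ 4 + q ^ 2 - 1
        = 0) ∧
      (q ^ 8 * ρ ^ 4 + ρ ^ 4 + 2 * q ^ 9 * ρ ^ 3 - 2 * q ^ 7 * ρ ^ 3 +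
        2 * q ^ 3 * ρ ^ 3 - 2 * q * ρ ^ 3 - q ^ 12 * ρ ^ 2 + q ^ 8 * ρ ^ 2 -
        4 * q ^ 6 * ρ ^ 2 + q ^ 4 * ρ ^ 2 - ρ ^ 2 - 2 * q ^ 11 * ρ + 2 * q ^ 9 * ρ -
        2 * q ^ 5 * ρ + 2 * q ^ 3 * ρ + q ^ 12 + q ^ 4 = 0) := by
  rintro ⟨r, h1, h2⟩
  have h1' : q - 1 ≠ 0 := sub_ne_zero.mpr (fun h => hroot 1 le_rfl (by simp [h]))
  have h2' : q + 1 ≠ 0 := by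
    intro h
    exact hroot 2 (by norm_num) (by linear_combination (q - 1) * h)
  have h9 : q ^ 6 + q ^ 3 + 1 ≠ 0 := by
    intro h
    exact hroot 9 (by norm_num) (by linear_combination (q ^ 3 - 1) * h)
  have h18 : q ^ 6 - q ^ 3 + 1 ≠ 0 := by
    intro h
    exact hroot 18 (by norm_num) (by linear_combination (q ^ 12 + q ^ 9 - q ^ 3 - 1) * h)
  have hc : q * (q - 1) ^ 6 * (q + 1) ^ 6 * (q ^ 6 + q ^ 3 + 1) * (q ^ 6 - q ^ 3 + 1) ≠ 0 :=
    mul_ne_zero (mul_ne_zero (mul_ne_zero (mul_ne_zero hq (pow_ne_zero 6 h1'))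
      (pow_ne_zero 6 h2')) h9) h18
  apply hc
  linear_combination
    (- q + 5*q^3 - 7*q^5 + 4*q^7 + 5*q^9 - 9*q^11 + 5*q^13 + 4*q^15 - 8*q^17 + 6*q^19
      - 2*q^21 + q^2*r - 2*q^4*r + 2*q^8*r - 4*q^10*r - q^12*r + 5*q^14*r - 6*q^16*r
      + q^18*r + q^20*r - q^22*r - 3*q*r^2 + 3*q^3*r^2 - q^5*r^2 - 4*q^7*r^2 + 5*q^9*r^2
      - 3*q^11*r^2 - q^13*r^2 + 4*q^15*r^2 - 4*q^17*r^2 + 2*q^19*r^2 + r^3 + q^6*r^3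
      + q^10*r^3 + q^14*r^3 - q^16*r^3 + q^18*r^3) * h1 +
    (2*q - 3*q^3 + 3*q^5 - q^7 - q^9 + 2*q^11 - q^13 - r + q^2*r - q^4*r - q^6*r
      + 2*q^8*r - 3*q^10*r + 2*q^12*r - q^14*r) * h2
end
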